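/- arXiv:2005.13188 — 2 statements merged into one kernel-verified Lean document; each statement's English description precedes it below -/
import Mathlib

section
/- If a positive braid β in the braid group B_n is i-square free for every i = 1, …, n−1 (i.e., no positive word representing β contains the subword σ_i σ_i), then β can be represented by a positive braid word containing at most one occurrence of the generator σ_{n−1}. -/
/-- The braid relations among `m` Artin generators (indexed `0,…,m-1`,
corresponding to `σ_1,…,σ_m`): far commutation and the braid relation. -/
def braidRels (m : ℕ) : Set (FreeGroup (Fin m)) :=
  {r | (∃ i j : Fin m, (i : ℕ) + 2 ≤ (j : ℕ) ∧
        r = FreeGroup.of i * FreeGroup.of j * (FreeGroup.of i)⁻¹ * (FreeGroup.of j)⁻¹) ∨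
      (∃ i j : Fin m, (i : ℕ) + 1 = (j : ℕ) ∧
        r = FreeGroup.of i * FreeGroup.of j * FreeGroup.of i *
            (FreeGroup.of j * FreeGroup.of i * FreeGroup.of j)⁻¹)}

/-- The braid group `B_n` on `n` strands, with `n - 1` Artin generators. -/
abbrev BraidGroup (n : ℕ) := PresentedGroup (braidRels (n - 1))

/-- The Artin generator `σ_k` (1-indexed: `1 ≤ k ≤ n - 1`) of `B_n`;
defined to be `1` for out-of-range indices. -/
def sgen (n k : ℕ) : BraidGroup n :=
  if h : 1 ≤ k ∧ k ≤ n - 1 then PresentedGroup.of (⟨k - 1, by omega⟩ : Fin (n - 1)) else 1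

/-- The descending product `σ_hi · σ_{hi-1} · ⋯ · σ_lo` in `B_n`
(the empty product `1` if `hi < lo`). -/
def chain (n hi lo : ℕ) : BraidGroup n :=
  (((List.range' lo (hi + 1 - lo)).reverse).map (sgen n)).prod


/-!
Letters `x : Fin m` stand for the generators `σ_{x+1}`. Induct on the number `k` of
generators a positive word uses. If `σ_k` occurs twice, take two consecutive occurrences
`σ_k b σ_k`: the middle word `b` lies in `σ_1, …, σ_{k-1}` and is again square free, so
inductively it can be rewritten with at most one `σ_{k-1}`. If it had none, it would commute
with `σ_k` and create the square `σ_k σ_k`; so `b = b₁ σ_{k-1} b₂` with `b₁, b₂` commuting with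
`σ_k`, and `σ_k b σ_k = b₁ σ_k σ_{k-1} σ_k b₂ = b₁ σ_{k-1} σ_k σ_{k-1} b₂` has one `σ_k` fewer.
-/

theorem List.exists_eq_append_cons_of_countP_pos {α : Type*} {p : α → Bool} {l : List α}
    (h : 0 < l.countP p) :
    ∃ a x d, l = a ++ x :: d ∧ p x ∧ a.countP p = 0 ∧ l.countP p = d.countP p + 1 := by
  obtain ⟨x, hx⟩ := Option.isSome_iff_exists.mp (List.find?_isSome.mpr (List.countP_pos_iff.mp h))
  obtain ⟨hpx, a, d, rfl, ha⟩ := List.find?_eq_some_iff_append.mp hx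
  have ha : a.countP p = 0 := List.countP_eq_zero.mpr (by simpa using ha)
  exact ⟨a, x, d, rfl, hpx, ha, by simp [ha, hpx]⟩

namespace PositiveBraid

open PresentedGroup

variable {m : ℕ}

def ofWord (w : List (Fin m)) : PresentedGroup (braidRels m) :=
  (w.map of).prod

@[simp] theorem ofWord_nil : ofWord ([] : List (Fin m)) = 1 := rfl

@[simp] theorem ofWord_cons (x : Fin m) (w : List (Fin m)) :
    ofWord (x :: w) = of x * ofWord w := List.prod_cons

@[simp] theorem ofWord_append (u v : List (Fin m)) : ofWord (u ++ v) = ofWord u * ofWord v := by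
  simp [ofWord]

def SquareFree (β : PresentedGroup (braidRels m)) : Prop :=
  ∀ w, ofWord w = β → ∀ i, ¬ [i, i] <:+: w

theorem SquareFree.of_mul_mul {β : PresentedGroup (braidRels m)} {u v : List (Fin m)}
    (h : SquareFree (ofWord u * β * ofWord v)) : SquareFree β := by
  rintro w rfl i ⟨s, t, hw⟩
  exact h (u ++ w ++ v) (by simp [mul_assoc]) i ⟨u ++ s, t ++ v, by simp [← hw]⟩

theorem commute_of_of {i j : Fin m} (h : (i : ℕ) + 2 ≤ j) :
    Commute (of i : PresentedGroup (braidRels m)) (of j) := by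
  show mk _ (.of i * .of j) = mk _ (.of j * .of i)
  exact mk_eq_mk_of_mul_inv_mem (Or.inl ⟨i, j, h, by group⟩)

theorem of_mul_of_mul_of {i j : Fin m} (h : (i : ℕ) + 1 = j) :
    (of i * of j * of i : PresentedGroup (braidRels m)) = of j * of i * of j :=
  mk_eq_mk_of_mul_inv_mem (Or.inr ⟨i, j, h, rfl⟩)

theorem commute_ofWord_of {x : Fin m} {w : List (Fin m)} (h : ∀ y ∈ w, (y : ℕ) + 2 ≤ x) :
    Commute (ofWord w) (of x) := by
  induction w with
  | nil => exact Commute.one_left _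
  | cons y w ih =>
    simp only [List.mem_cons, forall_eq_or_imp] at h
    simpa using (commute_of_of h.1).mul_left (ih h.2)

theorem commute_ofWord_of_of_countP_eq_zero {x : Fin m} {l : List (Fin m)} (hl : ∀ z ∈ l, (z : ℕ) < x)
    (h0 : l.countP (fun z : Fin m => (z : ℕ) + 1 = x) = 0) : Commute (ofWord l) (of x) :=
  commute_ofWord_of fun z hz => by
    have := List.countP_eq_zero.mp h0 z hz
    have := hl z hz
    simp only [decide_eq_true_eq] at *
    omega

theorem exists_braid_move {x : Fin m} {b : List (Fin m)} (hb : ∀ z ∈ b, (z : ℕ) < x)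
    (hcount : b.countP (fun z : Fin m => (z : ℕ) + 1 = x) ≤ 1)
    (hsf : SquareFree (of x * ofWord b * of x)) :
    ∃ b₁ y b₂, b = b₁ ++ y :: b₂ ∧
      of x * ofWord b * of x = ofWord (b₁ ++ y :: x :: y :: b₂) := by
  rcases Nat.eq_zero_or_pos (b.countP fun z : Fin m => (z : ℕ) + 1 = x) with h0 | hpos
  · have hcomm := commute_ofWord_of_of_countP_eq_zero hb h0
    refine (hsf (b ++ [x, x]) ?_ x ⟨b, [], by simp⟩).elim
    rw [← hcomm.eq]
    simp [mul_assoc]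
  obtain ⟨b₁, y, b₂, rfl, hy, hb₁, hb₁₂⟩ := List.exists_eq_append_cons_of_countP_pos hpos
  have hyx : (y : ℕ) + 1 = x := by simpa using hy
  have hb₂ : b₂.countP (fun z : Fin m => (z : ℕ) + 1 = x) = 0 := by omega
  have c₁ := commute_ofWord_of_of_countP_eq_zero (fun z hz => hb z (by simp [hz])) hb₁
  have c₂ := commute_ofWord_of_of_countP_eq_zero (fun z hz => hb z (by simp [hz])) hb₂
  have hxy : of y * of x * of y = (of x * of y * of x : PresentedGroup (braidRels m)) :=
    of_mul_of_mul_of hyx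
  refine ⟨b₁, y, b₂, rfl, ?_⟩
  simp only [ofWord_append, ofWord_cons]
  calc of x * (ofWord b₁ * (of y * ofWord b₂)) * of x
      = ofWord b₁ * (of x * of y * of x) * ofWord b₂ := by
        simp only [mul_assoc, c₂.eq]; rw [← mul_assoc (of x), c₁.symm.eq]; simp only [mul_assoc]
    _ = ofWord b₁ * (of y * (of x * (of y * ofWord b₂))) := by
        rw [← hxy]; simp only [mul_assoc]


theorem exists_ofWord_eq_countP_lt {k : ℕ} {w : List (Fin m)} (hw : ∀ x ∈ w, (x : ℕ) ≤ k)
    (hsf : SquareFree (ofWord w)) (htwo : 2 ≤ w.countP (fun x : Fin m => (x : ℕ) = k))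
    (ih : ∀ b : List (Fin m), (∀ z ∈ b, (z : ℕ) < k) → SquareFree (ofWord b) →
      ∃ b', ofWord b' = ofWord b ∧ (∀ z ∈ b', (z : ℕ) < k) ∧
        b'.countP (fun z : Fin m => (z : ℕ) + 1 = k) ≤ 1) :
    ∃ w', ofWord w' = ofWord w ∧ (∀ x ∈ w', (x : ℕ) ≤ k) ∧
      w'.countP (fun x : Fin m => (x : ℕ) = k) < w.countP (fun x : Fin m => (x : ℕ) = k) := by
  have hpos : 0 < w.countP (fun x : Fin m => (x : ℕ) = k) := by omega
  obtain ⟨a, x, d, rfl, hx, ha, had⟩ := List.exists_eq_append_cons_of_countP_pos hpos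
  have hd : 0 < d.countP (fun x : Fin m => (x : ℕ) = k) := by omega
  obtain ⟨b, x', c, rfl, hx', hb, hbc⟩ := List.exists_eq_append_cons_of_countP_pos hd
  obtain rfl : x = x' := Fin.ext (by simp_all)
  obtain rfl : (x : ℕ) = k := by simpa using hx
  have hbx : ∀ z ∈ b, (z : ℕ) < x := fun z hz => by
    have := List.countP_eq_zero.mp hb z hz
    have := hw z (by simp [hz])
    simp only [decide_eq_true_eq] at *
    omega
  obtain ⟨b', hb'b, hb'x, hb'count⟩ := ih b hbx
    (SquareFree.of_mul_mul (u := a ++ [x]) (v := x :: c) (by simpa [mul_assoc] using hsf))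
  obtain ⟨b₁, y, b₂, rfl, hmove⟩ := exists_braid_move hb'x hb'count
    (SquareFree.of_mul_mul (u := a) (v := c) (by simpa [hb'b, mul_assoc] using hsf))
  refine ⟨a ++ (b₁ ++ y :: x :: y :: b₂) ++ c, ?_, ?_, ?_⟩
  · rw [ofWord_append, ofWord_append, ← hmove, hb'b]
    simp [mul_assoc]
  · intro z hz
    simp only [List.mem_append, List.mem_cons] at hz hb'x hw
    grind
  · have hy : (y : ℕ) < x := hb'x y (by simp)
    have h₁ : b₁.countP (fun z : Fin m => (z : ℕ) = x) = 0 :=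
      List.countP_eq_zero.mpr fun z hz => by simpa using (hb'x z (by simp [hz])).ne
    have h₂ : b₂.countP (fun z : Fin m => (z : ℕ) = x) = 0 :=
      List.countP_eq_zero.mpr fun z hz => by simpa using (hb'x z (by simp [hz])).ne
    simp [List.countP_append, h₁, h₂, hy.ne, ha]

theorem exists_ofWord_eq_countP_le_one (k : ℕ) (w : List (Fin m)) (hw : ∀ x ∈ w, (x : ℕ) < k)
    (hsf : SquareFree (ofWord w)) :
    ∃ w', ofWord w' = ofWord w ∧ (∀ x ∈ w', (x : ℕ) < k) ∧
      w'.countP (fun x : Fin m => (x : ℕ) + 1 = k) ≤ 1 := by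
  induction k generalizing w with
  | zero => exact ⟨w, rfl, hw, by simp⟩
  | succ k ih =>
    simp only [Nat.lt_succ_iff, Nat.add_right_cancel_iff] at hw ⊢
    induction hc : w.countP (fun x : Fin m => (x : ℕ) = k) using Nat.strong_induction_on
      generalizing w with
    | _ c hc_ih =>
      by_cases hle : c ≤ 1
      · exact ⟨w, rfl, hw, hc ▸ hle⟩
      obtain ⟨w', hw'w, hw'k, hlt⟩ := exists_ofWord_eq_countP_lt hw hsf (by omega) ih
      obtain ⟨w'', hw''w', hw''⟩ := hc_ih _ (hc ▸ hlt) w' (hw'w ▸ hsf) hw'k rfl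
      exact ⟨w'', hw''w'.trans hw'w, hw''⟩

end PositiveBraid

/-- if a positive braid β ∈ B_n is i-square free for every i
(no positive word representing β contains σ_i σ_i), then β is represented
by a positive word containing at most one occurrence of σ_{n-1}. -/
theorem squareFree_at_most_one_top_generator (n : ℕ) (hn : 2 ≤ n) (β : BraidGroup n)
    (hpos : ∃ w : List (Fin (n - 1)), (w.map PresentedGroup.of).prod = β)
    (hsf : ∀ w : List (Fin (n - 1)), (w.map PresentedGroup.of).prod = β →
      ∀ i : Fin (n - 1), ¬ ([i, i] <:+: w)) :
    ∃ w : List (Fin (n - 1)), (w.map PresentedGroup.of).prod = β ∧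
      w.count (⟨n - 2, by omega⟩ : Fin (n - 1)) ≤ 1 := by
  obtain ⟨w, rfl⟩ := hpos
  obtain ⟨w', hw'w, -, hcount⟩ :=
    PositiveBraid.exists_ofWord_eq_countP_le_one (n - 1) w (fun x _ => x.isLt) hsf
  refine ⟨w', hw'w, ?_⟩
  rwa [List.count_eq_countP, List.countP_congr fun x _ => ?_]
  simp [Fin.ext_iff]
  omega
end

section
/- In the braid group B_n, the braid σ_1 B_0 σ_j^{a} σ_{j−1} σ_{j−2} ⋯ σ_2 σ_1 B_1 σ_j^{2} σ_{j−1} ⋯ σ_3 σ_2 is conjugate to σ_1 · (σ_2 B_1 σ_j^2 σ_{j−1} ⋯ σ_3 σ_2 B_0 σ_j^a σ_{j−1} ⋯ σ_3 σ_2), for any j ≥ 3, a ≥ 1, and B_0, B_1 in the subgroup generated by σ_{j+1}, …, σ_{n−1}. -/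
/-!
Write `C = σ_{j-1} ⋯ σ_3`, `U = B_0 σ_j^a C` and `V = B_1 σ_j^2 C`, so that the two braids are
`σ_1 U σ_2 σ_1 V σ_2` and `σ_1 σ_2 V σ_2 U σ_2`. Far commutation moves `σ_1` past `U`, and the
braid relation `σ_1 σ_2 σ_1 = σ_2 σ_1 σ_2` turns the first braid into `(U σ_2) (σ_1 σ_2 V σ_2)`,
a cyclic rotation of the second one `(σ_1 σ_2 V σ_2) (U σ_2)`.
-/

theorem isConj_mul_swap {G : Type*} [Group G] (a b : G) : IsConj (a * b) (b * a) :=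
  isConj_iff.mpr ⟨b, by group⟩

theorem isConj_of_commute_of_braid {G : Type*} [Group G] {s t u v : G} (hsu : Commute s u)
    (hst : s * t * s = t * s * t) : IsConj (s * u * t * s * v * t) (s * t * v * t * u * t) := by
  have : s * u * t * s * v * t = u * t * (s * t * v * t) := calc
    _ = u * (s * t * s) * v * t := by rw [hsu.eq]; group
    _ = u * t * (s * t * v * t) := by rw [hst]; group
  rw [this, show s * t * v * t * u * t = s * t * v * t * (u * t) by group]
  exact isConj_mul_swap _ _

theorem commute_sgen_of_add_two_le {n p q : ℕ} (h : p + 2 ≤ q) :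
    Commute (sgen n p) (sgen n q) := by
  unfold sgen
  split_ifs with hp hq
  · apply PresentedGroup.mk_eq_mk_of_mul_inv_mem
    refine Or.inl ⟨⟨p - 1, by omega⟩, ⟨q - 1, by omega⟩, by simp only; omega, ?_⟩
    rw [mul_inv_rev, ← mul_assoc]
  all_goals simp

theorem sgen_braid {n p : ℕ} (hp : 1 ≤ p) (hpn : p + 1 ≤ n - 1) :
    sgen n p * sgen n (p + 1) * sgen n p = sgen n (p + 1) * sgen n p * sgen n (p + 1) := by
  unfold sgen
  rw [dif_pos ⟨hp, by omega⟩, dif_pos ⟨by omega, hpn⟩]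
  exact PresentedGroup.mk_eq_mk_of_mul_inv_mem
    (Or.inr ⟨⟨p - 1, by omega⟩, ⟨p + 1 - 1, by omega⟩, by simp only; omega, rfl⟩)

theorem chain_eq_chain_mul_sgen {n hi lo : ℕ} (h : lo ≤ hi) :
    chain n hi lo = chain n hi (lo + 1) * sgen n lo := by
  unfold chain
  rw [show hi + 1 - lo = (hi + 1 - (lo + 1)) + 1 by omega, List.range'_succ, List.reverse_cons,
    List.map_append, List.prod_append]
  simp

theorem commute_sgen_chain {n hi lo p : ℕ} (h : p + 2 ≤ lo) :
    Commute (sgen n p) (chain n hi lo) := by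
  refine Commute.list_prod_right _ _ fun x hx ↦ ?_
  simp only [List.mem_map, List.mem_reverse, List.mem_range'_1] at hx
  obtain ⟨k, ⟨hk, -⟩, rfl⟩ := hx
  exact commute_sgen_of_add_two_le (by omega)

theorem commute_sgen_of_mem_closure {n j p : ℕ} (hp : p + 1 ≤ j) {B : BraidGroup n}
    (hB : B ∈ Subgroup.closure {x : BraidGroup n | ∃ k, j + 1 ≤ k ∧ k ≤ n - 1 ∧ x = sgen n k}) :
    Commute (sgen n p) B := by
  have hle : Subgroup.closure {x : BraidGroup n | ∃ k, j + 1 ≤ k ∧ k ≤ n - 1 ∧ x = sgen n k} ≤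
      Subgroup.centralizer {sgen n p} := by
    rw [Subgroup.closure_le]
    rintro _ ⟨k, hk, -, rfl⟩
    exact Subgroup.mem_centralizer_singleton_iff.mpr
      (commute_sgen_of_add_two_le (p := p) (by omega)).eq.symm
  exact (Subgroup.mem_centralizer_singleton_iff.mp (hle hB)).symm

theorem final_conjugation_general (n j a : ℕ) (hj : 3 ≤ j) (hjn : j ≤ n - 1)
    (B0 B1 : BraidGroup n)
    (h0 : B0 ∈ Subgroup.closure {x : BraidGroup n | ∃ k, j + 1 ≤ k ∧ k ≤ n - 1 ∧ x = sgen n k}) :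
    IsConj
      (sgen n 1 * B0 * (sgen n j) ^ a * chain n (j - 1) 1 * B1 * (sgen n j) ^ 2 *
        chain n (j - 1) 2)
      (sgen n 1 * (sgen n 2 * B1 * (sgen n j) ^ 2 * chain n (j - 1) 2 * B0 * (sgen n j) ^ a *
        chain n (j - 1) 2)) := by
  have hc2 : chain n (j - 1) 2 = chain n (j - 1) 3 * sgen n 2 :=
    chain_eq_chain_mul_sgen (by omega)
  have hc1 : chain n (j - 1) 1 = chain n (j - 1) 3 * sgen n 2 * sgen n 1 := by
    rw [chain_eq_chain_mul_sgen (by omega), hc2]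
  have hU : Commute (sgen n 1) (B0 * sgen n j ^ a * chain n (j - 1) 3) :=
    ((commute_sgen_of_mem_closure (by omega) h0).mul_right
      ((commute_sgen_of_add_two_le (by omega)).pow_right a)).mul_right
      (commute_sgen_chain le_rfl)
  rw [hc1, hc2]
  convert isConj_of_commute_of_braid (v := B1 * sgen n j ^ 2 * chain n (j - 1) 3) hU
    (sgen_braid le_rfl (by omega)) using 1 <;> group

/-- σ_1 B_0 σ_j^a σ_{j−1}⋯σ_2σ_1 B_1 σ_j² σ_{j−1}⋯σ_3σ_2 is conjugate to
σ_1 · (σ_2 B_1 σ_j² σ_{j−1}⋯σ_3σ_2 B_0 σ_j^a σ_{j−1}⋯σ_3σ_2), for j ≥ 3, a ≥ 1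
and B_0, B_1 ∈ ⟨σ_{j+1},…,σ_{n−1}⟩. -/
theorem final_conjugation (n j a : ℕ) (hj : 3 ≤ j) (hjn : j ≤ n - 1) (ha : 1 ≤ a)
    (B0 B1 : BraidGroup n)
    (h0 : B0 ∈ Subgroup.closure {x : BraidGroup n | ∃ k, j + 1 ≤ k ∧ k ≤ n - 1 ∧ x = sgen n k})
    (h1 : B1 ∈ Subgroup.closure {x : BraidGroup n | ∃ k, j + 1 ≤ k ∧ k ≤ n - 1 ∧ x = sgen n k}) :
    IsConj
      (sgen n 1 * B0 * (sgen n j) ^ a * chain n (j - 1) 1 * B1 * (sgen n j) ^ 2 *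
        chain n (j - 1) 2)
      (sgen n 1 * (sgen n 2 * B1 * (sgen n j) ^ 2 * chain n (j - 1) 2 * B0 * (sgen n j) ^ a *
        chain n (j - 1) 2)) :=
  final_conjugation_general n j a hj hjn B0 B1 h0
end
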